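/- arXiv:2312.05248 — 6 statements merged into one kernel-verified Lean document; each statement's English description precedes it below -/
import Mathlib

section
/- Let A ∈ ℝ^{t×m} and let B ∈ ℝ^{t×t} be an invertible matrix with BA = rref(A) (the reduced row echelon form of A). For any index i, there exists a row vector y ∈ ℝ^{1×t} such that yA has exactly one nonzero entry, located at index i, if and only if some row B_r of B has the property that B_r A has exactly one nonzero entry, located at index i. -/
/-- `y` solves `θ i` in `A`: the row vector `y * A` has exactly one nonzero
entry, located at index `i`. -/
def Solves {t m : ℕ} (y : Fin t → ℝ) (A : Matrix (Fin t) (Fin m) ℝ) (i : Fin m) : Prop :=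
  Matrix.vecMul y A i ≠ 0 ∧ ∀ j : Fin m, j ≠ i → Matrix.vecMul y A j = 0

/-- `M` is in reduced row echelon form. -/
def IsRREF {t m : ℕ} (M : Matrix (Fin t) (Fin m) ℝ) : Prop :=
  ∃ piv : Fin t → Option (Fin m),
    (∀ r j, piv r = some j →
      M r j = 1 ∧ (∀ j' : Fin m, j' < j → M r j' = 0) ∧ (∀ r' : Fin t, r' ≠ r → M r' j = 0)) ∧
    (∀ r, piv r = none → ∀ j, M r j = 0) ∧
    (∀ r r' j j', r < r' → piv r = some j → piv r' = some j' → j < j') ∧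
    (∀ r r', r < r' → piv r = none → piv r' = none)

lemma rref_key {t m : ℕ} (M : Matrix (Fin t) (Fin m) ℝ) (hM : IsRREF M) (i : Fin m)
    (z : Fin t → ℝ) (hz : Solves z M i) :
    ∃ r : Fin t, M r i ≠ 0 ∧ ∀ j : Fin m, j ≠ i → M r j = 0 := by
  obtain ⟨piv, h1, h2, h3, _⟩ := hM
  have hcol : ∀ j, Matrix.vecMul z M j = ∑ r, z r * M r j := by
    intro j; simp [Matrix.vecMul, dotProduct]
  -- any row with nonzero coefficient and a pivot has pivot i
  have claimA : ∀ r j, z r ≠ 0 → piv r = some j → j = i := by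
    intro r j hzr hp
    by_contra hji
    obtain ⟨hrj1, _, hrj3⟩ := h1 r j hp
    have : Matrix.vecMul z M j = z r := by
      rw [hcol]
      rw [Finset.sum_eq_single r]
      · rw [hrj1]; ring
      · intro r' _ hr'; rw [hrj3 r' hr']; ring
      · simp
    exact hzr (this ▸ hz.2 j hji)
  -- find a row contributing to column i
  have hi : Matrix.vecMul z M i ≠ 0 := hz.1
  rw [hcol] at hi
  obtain ⟨r, -, hr⟩ := Finset.exists_ne_zero_of_sum_ne_zero hi
  have hzr : z r ≠ 0 := fun h => hr (by rw [h]; ring)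
  have hMri : M r i ≠ 0 := fun h => hr (by rw [h]; ring)
  have hpr : piv r = some i := by
    cases hp : piv r with
    | none => exact absurd (h2 r hp i) hMri
    | some j => rw [claimA r j hzr hp]
  refine ⟨r, hMri, fun j hji => ?_⟩
  -- z ⋆ M = (z r) • (row r)
  have hsum : ∀ j', Matrix.vecMul z M j' = z r * M r j' := by
    intro j'
    rw [hcol, Finset.sum_eq_single r]
    · intro r' _ hr'
      by_cases hz' : z r' = 0
      · rw [hz']; ring
      · cases hp' : piv r' with
        | none => rw [h2 r' hp' j']; ring
        | some k =>
          exfalso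
          have hk : k = i := claimA r' k hz' hp'
          subst hk
          rcases lt_trichotomy r' r with h | h | h
          · exact absurd (h3 r' r k k h hp' hpr) (lt_irrefl k)
          · exact hr' h
          · exact absurd (h3 r r' k k h hpr hp') (lt_irrefl k)
    · simp
  have := hz.2 j hji
  rw [hsum j] at this
  exact (mul_eq_zero.mp this).resolve_left hzr

theorem stmt_1 (t m : ℕ) (A : Matrix (Fin t) (Fin m) ℝ)
    (B : Matrix (Fin t) (Fin t) ℝ) (hB : IsUnit B) (hBA : IsRREF (B * A)) (i : Fin m) :
    (∃ y : Fin t → ℝ, Solves y A i) ↔ (∃ r : Fin t, Solves (B r) A i) := by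
  have hrow : ∀ r j, Matrix.vecMul (B r) A j = (B * A) r j := by
    intro r j; simp [Matrix.vecMul, Matrix.mul_apply, dotProduct]
  constructor
  · rintro ⟨y, hy⟩
    have hBinv : Invertible B := hB.invertible
    set z : Fin t → ℝ := Matrix.vecMul y B⁻¹ with hzdef
    have hzBA : ∀ j, Matrix.vecMul z (B * A) j = Matrix.vecMul y A j := by
      intro j
      rw [hzdef, Matrix.vecMul_vecMul, ← Matrix.mul_assoc,
        Matrix.nonsing_inv_mul B ((Matrix.isUnit_iff_isUnit_det B).mp hB), Matrix.one_mul]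
    have hz : Solves z (B * A) i := by
      constructor
      · rw [hzBA]; exact hy.1
      · intro j hj; rw [hzBA]; exact hy.2 j hj
    obtain ⟨r, hr1, hr2⟩ := rref_key (B * A) hBA i z hz
    refine ⟨r, ?_, fun j hj => ?_⟩
    · rw [hrow]; exact hr1
    · rw [hrow]; exact hr2 j hj
  · rintro ⟨r, hr⟩
    exact ⟨B r, hr⟩
end

section
/- Let A ∈ ℝ^{t×m} and form the block matrix A' = [[A, R],[0, I]] where R ∈ ℝ^{t×s} is arbitrary, 0 is the s×m zero matrix, and I is the s×s identity. Then for any i < m, there exists a row vector y with yA having its unique nonzero entry at index i if and only if there exists a row vector z (of length t+s) with zA' having its unique nonzero entry at index i. -/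
/-- `y` is a partial solution for column `i` of `A`: the row vector `y * A`
has exactly one nonzero entry, located at index `i`. -/
def SolvesAt {ι κ : Type*} [Fintype ι] (y : ι → ℝ) (A : Matrix ι κ ℝ) (i : κ) : Prop :=
  Matrix.vecMul y A i ≠ 0 ∧ ∀ j : κ, j ≠ i → Matrix.vecMul y A j = 0

theorem stmt_3 (t m s : ℕ) (A : Matrix (Fin t) (Fin m) ℝ) (R : Matrix (Fin t) (Fin s) ℝ)
    (i : Fin m) :
    (∃ y : Fin t → ℝ, SolvesAt y A i) ↔
      (∃ z : Fin t ⊕ Fin s → ℝ,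
        SolvesAt z (Matrix.fromBlocks A R 0 (1 : Matrix (Fin s) (Fin s) ℝ)) (Sum.inl i)) := by
  constructor
  · rintro ⟨y, hy1, hy2⟩
    refine ⟨Sum.elim y (fun k => - Matrix.vecMul y R k), ?_, ?_⟩
    · simpa [Matrix.vecMul_fromBlocks] using hy1
    · rintro (j | k) hj
      · simpa [Matrix.vecMul_fromBlocks] using hy2 j (by simpa using hj)
      · simp [Matrix.vecMul_fromBlocks, Matrix.vecMul_one]
  · rintro ⟨z, hz1, hz2⟩
    refine ⟨z ∘ Sum.inl, ?_, fun j hj => ?_⟩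
    · simpa [Matrix.vecMul_fromBlocks] using hz1
    · simpa [Matrix.vecMul_fromBlocks] using hz2 (Sum.inl j) (by simpa using hj)
end

section
/- Let A ∈ {0,1}^{t×(n·t)} be a binary matrix with columns grouped into n ≥ 2 blocks of size t, such that every row has exactly one 1 in each block. Then there is no row vector y ∈ ℝ^{1×t} such that yA has exactly one nonzero entry. -/
/-! Each row of `A` sums to `1` on every block of columns, so every block of `y ᵥ* A` has the
same sum `∑ τ, y τ`. A vector with exactly one nonzero entry cannot have this property once
there is a second block: that block sums to `0` while the block of the nonzero entry does not. -/

open Matrix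

theorem Matrix.sum_vecMul_apply_block_eq_sum {m ι κ R : Type*} [Fintype m] [Fintype κ]
    [NonAssocSemiring R] {A : Matrix m (ι × κ) R} (hA : ∀ τ ν, ∑ i, A τ (ν, i) = 1)
    (y : m → R) (ν : ι) : ∑ i, (y ᵥ* A) (ν, i) = ∑ τ, y τ := by
  simp only [vecMul, dotProduct]
  rw [Finset.sum_comm]
  simp only [← Finset.mul_sum, hA, mul_one]

theorem Fintype.sum_block_eq_ite_of_eq_zero_of_ne {ι κ M : Type*} [DecidableEq ι] [Fintype κ]
    [AddCommMonoid M] {f : ι × κ → M} {c : ι × κ} (hf : ∀ c' ≠ c, f c' = 0) (ν : ι) :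
    ∑ i, f (ν, i) = if ν = c.1 then f c else 0 := by
  split_ifs with hν
  · subst hν
    exact Fintype.sum_eq_single c.2 fun i hi ↦ hf _ fun h ↦ hi (congrArg Prod.snd h)
  · exact Finset.sum_eq_zero fun i _ ↦ hf _ fun h ↦ hν (congrArg Prod.fst h)

theorem stmt_5_general (t n : ℕ) (hn : 2 ≤ n)
    (A : Matrix (Fin t) (Fin n × Fin t) ℝ)
    (hone : ∀ τ ν, ∑ i : Fin t, A τ (ν, i) = 1) :
    ¬ ∃ (y : Fin t → ℝ) (c : Fin n × Fin t),
        Matrix.vecMul y A c ≠ 0 ∧ ∀ c' : Fin n × Fin t, c' ≠ c → Matrix.vecMul y A c' = 0 := by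
  rintro ⟨y, c, hc, hzero⟩
  obtain ⟨ν, hν⟩ : ∃ ν : Fin n, ν ≠ c.1 :=
    Fintype.exists_ne_of_one_lt_card (by rwa [Fintype.card_fin]) c.1
  have hsum (ν : Fin n) : ∑ τ, y τ = if ν = c.1 then (y ᵥ* A) c else 0 := by
    rw [← sum_vecMul_apply_block_eq_sum hone y ν, Fintype.sum_block_eq_ite_of_eq_zero_of_ne hzero]
  exact hc (by simpa [hν] using (hsum c.1).symm.trans (hsum ν))

theorem stmt_5 (t n : ℕ) (hn : 2 ≤ n)
    (A : Matrix (Fin t) (Fin n × Fin t) ℝ)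
    (hbin : ∀ τ c, A τ c = 0 ∨ A τ c = 1)
    (hone : ∀ τ ν, ∑ i : Fin t, A τ (ν, i) = 1) :
    ¬ ∃ (y : Fin t → ℝ) (c : Fin n × Fin t),
        Matrix.vecMul y A c ≠ 0 ∧ ∀ c' : Fin n × Fin t, c' ≠ c → Matrix.vecMul y A c' = 0 :=
  stmt_5_general t n hn A hone
end

section
/- Let M ∈ {0,1}^{s×n} be a binary matrix in which all rows are pairwise distinct, and let y ∈ ℝ^{1×s} have all coordinates nonzero. Suppose yM has exactly one nonzero entry. Then the bipartite graph H with vertex classes {rows} ∪ {columns} and an edge between row σ and column ν iff M_{σ,ν} = 1, where every row of M has at least 2 ones, contains a cycle. -/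
/-!
A finite acyclic graph with at least one edge has two distinct leaves (the ends of a longest
path). In `bipGraph M` no row is a leaf, since every row has two ones. A column that is a leaf
has a single one, in some row `σ`, so the corresponding entry of `yM` is `y σ ≠ 0`; hence it is
the column `i`. Two distinct leaves cannot both be `i`.
-/

/-- The bipartite graph on rows ⊕ columns with an edge between row `σ` and
column `ν` iff `M σ ν = 1`. -/
def bipGraph {s n : ℕ} (M : Matrix (Fin s) (Fin n) ℝ) : SimpleGraph (Fin s ⊕ Fin n) where
  Adj a b :=
    (∃ σ ν, a = Sum.inl σ ∧ b = Sum.inr ν ∧ M σ ν = 1) ∨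
    (∃ σ ν, a = Sum.inr ν ∧ b = Sum.inl σ ∧ M σ ν = 1)
  symm := by
    constructor
    rintro a b (⟨σ, ν, rfl, rfl, h⟩ | ⟨σ, ν, rfl, rfl, h⟩)
    · exact Or.inr ⟨σ, ν, rfl, rfl, h⟩
    · exact Or.inl ⟨σ, ν, rfl, rfl, h⟩
  loopless := by
    constructor
    rintro a (⟨σ, ν, rfl, h, -⟩ | ⟨σ, ν, rfl, h, -⟩) <;> simp at h

namespace SimpleGraph

variable {V : Type*} {G : SimpleGraph V}

-- The two ends of a longest path are leaves.
theorem IsAcyclic.exists_ne_existsUnique_adj [Finite V] (hG : G.IsAcyclic) {a b : V}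
    (hab : G.Adj a b) : ∃ u v, u ≠ v ∧ (∃! w, G.Adj u w) ∧ ∃! w, G.Adj v w := by
  have : Nonempty V := ⟨a⟩
  obtain ⟨u, v, p, hp, hmax⟩ := Walk.exists_isPath_forall_isPath_length_le_length G
  have hnil : ¬p.Nil := fun h ↦ by
    simpa [h.length_eq_zero] using hmax _ _ _ (Walk.IsPath.of_adj hab)
  refine ⟨u, v, hp.nil_iff_eq.not.mp hnil, ⟨_, p.adj_snd hnil, fun w hadj ↦ ?_⟩,
    ⟨_, p.adj_penultimate hnil |>.symm, fun w hadj ↦ ?_⟩⟩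
  · apply hG.eq_snd_of_adj_start hp hadj
    have : ¬(p.cons hadj.symm).IsPath := by grind [Walk.length_cons]
    grind [hp.cons]
  · apply hG.eq_penultimate_of_adj_end hp hadj
    have : ¬(p.concat hadj).IsPath := by grind [Walk.length_concat]
    grind [hp.concat]

end SimpleGraph

theorem Matrix.vecMul_apply_eq_of_forall_ne_eq_zero {m n R : Type*} [Fintype m] [Semiring R]
    {M : Matrix m n R} {σ : m} {j : n} (h : ∀ σ', σ' ≠ σ → M σ' j = 0) (y : m → R) :
    vecMul y M j = y σ * M σ j := by
  simp only [vecMul, dotProduct]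
  exact Finset.sum_eq_single σ (fun σ' _ hσ' ↦ by rw [h σ' hσ', mul_zero]) (by simp)

section bipGraph

variable {s n : ℕ} {M : Matrix (Fin s) (Fin n) ℝ}

@[simp]
theorem bipGraph_adj_inl_inr {σ : Fin s} {ν : Fin n} :
    (bipGraph M).Adj (.inl σ) (.inr ν) ↔ M σ ν = 1 := by
  simp [bipGraph]

@[simp]
theorem bipGraph_adj_inr_inl {σ : Fin s} {ν : Fin n} :
    (bipGraph M).Adj (.inr ν) (.inl σ) ↔ M σ ν = 1 := by
  simp [bipGraph]

@[simp]
theorem not_bipGraph_adj_inr_inr {ν ν' : Fin n} : ¬(bipGraph M).Adj (.inr ν) (.inr ν') := by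
  simp [bipGraph]

theorem not_existsUnique_bipGraph_adj_inl {σ : Fin s}
    (hσ : 2 ≤ (Finset.univ.filter fun ν => M σ ν = 1).card) :
    ¬∃! w, (bipGraph M).Adj (.inl σ) w := by
  rintro ⟨w, -, hw⟩
  obtain ⟨ν, hν, ν', hν', hne⟩ := Finset.one_lt_card.mp hσ
  exact hne (Sum.inr_injective <|
    (hw _ (by simpa using hν)).trans (hw _ (by simpa using hν')).symm)

theorem exists_vecMul_apply_eq_of_existsUnique_bipGraph_adj_inr
    (hbin : ∀ σ ν, M σ ν = 0 ∨ M σ ν = 1) {j : Fin n}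
    (hj : ∃! w, (bipGraph M).Adj (.inr j) w) (y : Fin s → ℝ) :
    ∃ σ, Matrix.vecMul y M j = y σ := by
  obtain ⟨(σ | ν), hσ, hw⟩ := hj
  · refine ⟨σ, ?_⟩
    have hcol : ∀ σ', σ' ≠ σ → M σ' j = 0 := fun σ' hne ↦
      (hbin σ' j).resolve_right fun h ↦ hne (Sum.inl_injective (hw _ (by simpa using h)))
    rw [Matrix.vecMul_apply_eq_of_forall_ne_eq_zero hcol, bipGraph_adj_inr_inl.mp hσ, mul_one]
  · exact absurd hσ not_bipGraph_adj_inr_inr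

end bipGraph

theorem stmt_7_general (s n : ℕ) (M : Matrix (Fin s) (Fin n) ℝ)
    (hbin : ∀ σ ν, M σ ν = 0 ∨ M σ ν = 1)
    (htwo : ∀ σ : Fin s, 2 ≤ (Finset.univ.filter fun ν => M σ ν = 1).card)
    (y : Fin s → ℝ) (hy : ∀ σ, y σ ≠ 0)
    (i : Fin n) (hnz : Matrix.vecMul y M i ≠ 0)
    (hz : ∀ j : Fin n, j ≠ i → Matrix.vecMul y M j = 0) :
    ¬ (bipGraph M).IsAcyclic := by
  intro hacyc
  have leaf_eq : ∀ c, (∃! w, (bipGraph M).Adj c w) → c = .inr i := by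
    rintro (σ | j) hc
    · exact absurd hc (not_existsUnique_bipGraph_adj_inl (htwo σ))
    · obtain ⟨σ, hσ⟩ := exists_vecMul_apply_eq_of_existsUnique_bipGraph_adj_inr hbin hc y
      by_contra hji
      exact hy σ (hσ ▸ hz j fun h ↦ hji (congrArg Sum.inr h))
  obtain ⟨σ, -, -⟩ : ∃ σ ∈ Finset.univ, y σ * M σ i ≠ 0 :=
    Finset.exists_ne_zero_of_sum_ne_zero hnz
  obtain ⟨ν, hν⟩ := Finset.card_pos.mp (lt_of_lt_of_le two_pos (htwo σ))
  obtain ⟨u, v, huv, hu, hv⟩ :=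
    hacyc.exists_ne_existsUnique_adj (bipGraph_adj_inl_inr.mpr (Finset.mem_filter.mp hν).2)
  exact huv ((leaf_eq u hu).trans (leaf_eq v hv).symm)

theorem stmt_7 (s n : ℕ) (M : Matrix (Fin s) (Fin n) ℝ)
    (hbin : ∀ σ ν, M σ ν = 0 ∨ M σ ν = 1)
    (hdist : ∀ σ σ' : Fin s, σ ≠ σ' → M σ ≠ M σ')
    (htwo : ∀ σ : Fin s, 2 ≤ (Finset.univ.filter fun ν => M σ ν = 1).card)
    (y : Fin s → ℝ) (hy : ∀ σ, y σ ≠ 0)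
    (i : Fin n) (hnz : Matrix.vecMul y M i ≠ 0)
    (hz : ∀ j : Fin n, j ≠ i → Matrix.vecMul y M j = 0) :
    ¬ (bipGraph M).IsAcyclic :=
  stmt_7_general s n M hbin htwo y hy i hnz hz
end

section
/- Let G be a finite simple undirected graph, C a set of vertices (adversaries) each of which has either zero or at least two neighbours outside C, and let H be the bipartite graph on C × N_G(C) with edges those of G between C and N_G(C). If G is acyclic then for every binary matrix A whose rows each equal the indicator vector (over N_G(C)) of N_G(c) for some c ∈ C repeated with arbitrary column time-splitting (each row has at most one 1 per neighbour-block, and row τ has a 1 in block ν iff the corresponding adversary is adjacent to neighbour ν), there is no row vector y such that yA has exactly one nonzero entry. -/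
/-!
Let `c τ` be the adversary of row `τ` and `w v` the total weight that `y` puts on the rows of `v`.
Summing `y ᵥ* A` over the block of a neighbour `ν` gives `∑ w v` over the adversaries `v`
adjacent to `ν`; so a partial solution at `ν₀` makes this neighbourhood sum vanish at every
`ν ≠ ν₀` but not at `ν₀`. Then the edges `c ν` with `w c ≠ 0` span a nonempty subforest in
which every adversary has degree at least two (by the degree assumption) and so does every
neighbour other than `ν₀` (one nonzero term of a vanishing sum forces a second one). Following
a longest path of this forest, one of its ends differs from `ν₀` and could be extended.
-/

theorem Finset.exists_ne_and_ne_zero_of_sum_eq_zero {ι M : Type*} [AddCommGroup M]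
    {s : Finset ι} {f : ι → M} (hs : ∑ i ∈ s, f i = 0) {a : ι} (ha : a ∈ s) (hfa : f a ≠ 0) :
    ∃ b ∈ s, b ≠ a ∧ f b ≠ 0 := by
  classical
  have hrest : ∑ i ∈ s.erase a, f i ≠ 0 := by
    rw [← add_sum_erase s f ha, add_eq_zero_iff_neg_eq] at hs
    rw [← hs, neg_ne_zero]
    exact hfa
  obtain ⟨b, hb, hfb⟩ := exists_ne_zero_of_sum_ne_zero hrest
  exact ⟨b, mem_of_mem_erase hb, ne_of_mem_erase hb, hfb⟩

open Matrix in
theorem Matrix.sum_vecMul_apply_prodMk {m n ι R : Type*} [Fintype m] [Fintype ι]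
    [NonUnitalNonAssocSemiring R] (y : m → R) (A : Matrix m (n × ι) R) (ν : n) :
    ∑ i, (y ᵥ* A) (ν, i) = ∑ τ, y τ * ∑ i, A τ (ν, i) := by
  simp only [vecMul, dotProduct, Finset.mul_sum]
  exact Finset.sum_comm

namespace SimpleGraph

variable {V : Type*} {G : SimpleGraph V}

theorem IsAcyclic.eq_of_forall_ne_exists_two_adj [Finite V] (hG : G.IsAcyclic) (x₀ : V)
    (h : ∀ v, v ≠ x₀ → ∃ a b, a ≠ b ∧ G.Adj v a ∧ G.Adj v b) (v : V) : v = x₀ := by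
  have : Nonempty V := ⟨v⟩
  obtain ⟨_, _, p, hp, hmax⟩ := Walk.exists_isPath_forall_isPath_length_le_length G
  have end_eq {u w : V} (q : G.Walk u w) (hq : q.IsPath) (hlen : p.length ≤ q.length) :
      w = x₀ := by
    by_contra hw
    obtain ⟨a, b, hab, ha, hb⟩ := h w hw
    have eq_penultimate {z : V} (hz : G.Adj w z) : z = q.penultimate := by
      refine hG.eq_penultimate_of_adj_end hq hz (not_not.mp fun hzq => ?_)
      have := hmax _ _ _ (hq.concat hzq hz)
      rw [Walk.length_concat] at this
      omega
    exact hab ((eq_penultimate ha).trans (eq_penultimate hb).symm)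
  have hp_nil : p.length = 0 := by
    have hu := end_eq p.reverse hp.reverse (by rw [Walk.length_reverse])
    have hw := end_eq p hp le_rfl
    subst hu hw
    exact (Walk.isPath_iff_nil.mp hp).length_eq_zero
  exact end_eq (Walk.nil : G.Walk v v) Walk.IsPath.nil (by rw [hp_nil]; exact Nat.zero_le _)

theorem IsAcyclic.sum_neighborFinset_eq_zero {M : Type*} [AddCommGroup M] [Fintype V]
    [DecidableRel G.Adj] (hG : G.IsAcyclic) {C : Set V}
    (hdeg : ∀ c ∈ C, ({v : V | v ∉ C ∧ G.Adj c v}.ncard = 0 ∨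
                      2 ≤ {v : V | v ∉ C ∧ G.Adj c v}.ncard))
    {w : V → M} (hw : ∀ v ∉ C, w v = 0) {ν₀ : V} (hν₀ : ν₀ ∉ C)
    (hsum : ∀ ν ∉ C, (∃ c ∈ C, G.Adj c ν) → ν ≠ ν₀ → ∑ v ∈ G.neighborFinset ν, w v = 0) :
    ∑ v ∈ G.neighborFinset ν₀, w v = 0 := by
  classical
  by_contra h₀
  obtain ⟨c₀, hc₀, hwc₀⟩ := Finset.exists_ne_zero_of_sum_ne_zero h₀
  have mem_C {c : V} (hc : w c ≠ 0) : c ∈ C := not_imp_comm.mp (hw c) hc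
  -- the endpoints of the edges `c ν` with `w c ≠ 0` and `ν ∉ C` form a subforest in which
  -- every vertex other than `ν₀` has degree at least two
  let S : Set V := {x | ∃ c ν, w c ≠ 0 ∧ ν ∉ C ∧ G.Adj c ν ∧ (x = c ∨ x = ν)}
  have hc₀ν₀ : G.Adj c₀ ν₀ := (mem_neighborFinset G ν₀ c₀).mp hc₀ |>.symm
  let x₀ : S := ⟨ν₀, c₀, ν₀, hwc₀, hν₀, hc₀ν₀, Or.inr rfl⟩
  have two_adj (x : S) (hx : x ≠ x₀) :
      ∃ a b : S, a ≠ b ∧ (G.induce S).Adj x a ∧ (G.induce S).Adj x b := by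
    obtain ⟨x, c, ν, hc, hν, hcν, rfl | rfl⟩ := x
    · have two_le : 2 ≤ {v | v ∉ C ∧ G.Adj x v}.ncard :=
        (hdeg x (mem_C hc)).resolve_left (Set.ncard_ne_zero_of_mem ⟨hν, hcν⟩)
      obtain ⟨ν', ⟨hν'C, hcν'⟩, hν'ν⟩ := Set.exists_ne_of_one_lt_ncard two_le ν
      exact ⟨⟨ν, x, ν, hc, hν, hcν, Or.inr rfl⟩, ⟨ν', x, ν', hc, hν'C, hcν', Or.inr rfl⟩,
        fun h => hν'ν (congrArg Subtype.val h).symm, hcν, hcν'⟩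
    · have hxν₀ : x ≠ ν₀ := fun h => hx (Subtype.ext h)
      obtain ⟨c', hc'x, hc'c, hwc'⟩ := Finset.exists_ne_and_ne_zero_of_sum_eq_zero
        (hsum x hν ⟨c, mem_C hc, hcν⟩ hxν₀) ((mem_neighborFinset G x c).mpr hcν.symm) hc
      have hxc' : G.Adj c' x := ((mem_neighborFinset G x c').mp hc'x).symm
      exact ⟨⟨c, c, x, hc, hν, hcν, Or.inl rfl⟩, ⟨c', c', x, hwc', hν, hxc', Or.inl rfl⟩,
        fun h => hc'c (congrArg Subtype.val h).symm, hcν.symm, hxc'.symm⟩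
  have hc₀_eq : c₀ = ν₀ := congrArg Subtype.val <|
    (hG.induce S).eq_of_forall_ne_exists_two_adj x₀ two_adj
      ⟨c₀, c₀, ν₀, hwc₀, hν₀, hc₀ν₀, Or.inl rfl⟩
  exact hν₀ (hc₀_eq ▸ mem_C hwc₀)

end SimpleGraph

theorem stmt_9_general {V : Type*} [Fintype V] (G : SimpleGraph V)
    (C : Set V)
    (hdeg : ∀ c ∈ C, ({v : V | v ∉ C ∧ G.Adj c v}.ncard = 0 ∨
                      2 ≤ {v : V | v ∉ C ∧ G.Adj c v}.ncard))
    (hacyc : G.IsAcyclic)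
    (t : ℕ)
    (A : Matrix (Fin t) ({v : V // v ∉ C ∧ ∃ c ∈ C, G.Adj c v} × Fin t) ℝ)
    (hrows : ∀ τ : Fin t, ∃ c ∈ C,
      ∀ ν : {v : V // v ∉ C ∧ ∃ c ∈ C, G.Adj c v},
        (G.Adj c ν.1 → ∑ i : Fin t, A τ (ν, i) = 1) ∧
        (¬ G.Adj c ν.1 → ∀ i : Fin t, A τ (ν, i) = 0)) :
    ¬ ∃ (y : Fin t → ℝ) (p : {v : V // v ∉ C ∧ ∃ c ∈ C, G.Adj c v} × Fin t),
        Matrix.vecMul y A p ≠ 0 ∧ ∀ q, q ≠ p → Matrix.vecMul y A q = 0 := by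
  classical
  rintro ⟨y, ⟨ν₀, i₀⟩, hne, hzero⟩
  choose c hcC hcA using hrows
  let w : V → ℝ := fun v => ∑ τ, if c τ = v then y τ else 0
  have block_sum (ν : {v : V // v ∉ C ∧ ∃ c ∈ C, G.Adj c v}) :
      ∑ i, Matrix.vecMul y A (ν, i) = ∑ v ∈ G.neighborFinset ν, w v := by
    rw [Matrix.sum_vecMul_apply_prodMk, Finset.sum_comm]
    refine Finset.sum_congr rfl fun τ _ => ?_
    rw [Finset.sum_ite_eq]
    by_cases hadj : G.Adj (c τ) ν
    · rw [(hcA τ ν).1 hadj, mul_one, if_pos ((G.mem_neighborFinset _ _).mpr hadj.symm)]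
    · rw [Finset.sum_eq_zero fun i _ => (hcA τ ν).2 hadj i, mul_zero,
        if_neg fun h => hadj ((G.mem_neighborFinset _ _).mp h).symm]
  have hw (v : V) (hv : v ∉ C) : w v = 0 :=
    Finset.sum_eq_zero fun τ _ => if_neg fun h : c τ = v => hv (h ▸ hcC τ)
  have hsum (ν : V) (hν : ν ∉ C) (hνC : ∃ c ∈ C, G.Adj c ν) (hνν₀ : ν ≠ ν₀) :
      ∑ v ∈ G.neighborFinset ν, w v = 0 := by
    rw [← block_sum ⟨ν, hν, hνC⟩]
    exact Finset.sum_eq_zero fun i _ =>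
      hzero _ fun h => hνν₀ (congrArg Subtype.val (Prod.ext_iff.mp h).1)
  apply hne
  rw [← Finset.sum_eq_single i₀ (fun i _ hi => hzero _ fun h => hi (Prod.ext_iff.mp h).2)
    (fun h => absurd (Finset.mem_univ i₀) h), block_sum]
  exact hacyc.sum_neighborFinset_eq_zero hdeg hw ν₀.2.1 hsum

theorem stmt_9 {V : Type*} [Fintype V] [DecidableEq V] (G : SimpleGraph V)
    (C : Set V)
    (hdeg : ∀ c ∈ C, ({v : V | v ∉ C ∧ G.Adj c v}.ncard = 0 ∨
                      2 ≤ {v : V | v ∉ C ∧ G.Adj c v}.ncard))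
    (hacyc : G.IsAcyclic)
    (t : ℕ)
    (A : Matrix (Fin t) ({v : V // v ∉ C ∧ ∃ c ∈ C, G.Adj c v} × Fin t) ℝ)
    (hbin : ∀ τ c, A τ c = 0 ∨ A τ c = 1)
    (hrows : ∀ τ : Fin t, ∃ c ∈ C,
      ∀ ν : {v : V // v ∉ C ∧ ∃ c ∈ C, G.Adj c v},
        (G.Adj c ν.1 → ∑ i : Fin t, A τ (ν, i) = 1) ∧
        (¬ G.Adj c ν.1 → ∀ i : Fin t, A τ (ν, i) = 0)) :
    ¬ ∃ (y : Fin t → ℝ) (p : {v : V // v ∉ C ∧ ∃ c ∈ C, G.Adj c v} × Fin t),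
        Matrix.vecMul y A p ≠ 0 ∧ ∀ q, q ≠ p → Matrix.vecMul y A q = 0 :=
  stmt_9_general G C hdeg hacyc t A hrows
end

section
/- Let G be a finite simple undirected graph with girth strictly greater than 2k, and let C be a set of k adversary vertices each having either zero or at least two neighbours outside C. Then the adversarial knowledge matrix A (as defined from summations over direct neighbourhoods N_G(c), c ∈ C, over any number of rounds t) admits no row vector y such that yA has exactly one nonzero entry. -/
open SimpleGraph Finset

private lemma core_girth {V : Type*} [Fintype V] [DecidableEq V] (G : SimpleGraph V) [DecidableRel G.Adj]
    (k : ℕ) (C : Finset V) (hk : C.card = k)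
    (hdeg : ∀ c ∈ C, ({v : V | v ∉ C ∧ G.Adj c v}.ncard = 0 ∨
                      2 ≤ {v : V | v ∉ C ∧ G.Adj c v}.ncard))
    (hgirth : 2 * (k : ℕ∞) < G.girth)
    (w : V → ℝ) (ν₀ : V) (hν₀ : ν₀ ∉ C)
    (hT1 : ∑ c ∈ C.filter (fun c => G.Adj c ν₀), w c ≠ 0)
    (hT0 : ∀ ν, ν ∉ C → ν ≠ ν₀ → ∑ c ∈ C.filter (fun c => G.Adj c ν), w c = 0) :
    False := by
  classical
  -- any cycle has length at least 2k+1
  have hgn : 2 * k < G.girth := by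
    have : ((2 * k : ℕ) : ℕ∞) < (G.girth : ℕ∞) := by push_cast; exact hgirth
    exact_mod_cast this
  have hcycbound : ∀ (a : V) (q : G.Walk a a), q.IsCycle → 2 * k + 1 ≤ q.length := by
    intro a q hq
    have h1 : G.egirth ≤ q.length := (le_egirth.mp le_rfl) a q hq
    have h2 : G.girth ≤ q.length := by
      have := ENat.toNat_le_toNat h1 (by simp)
      simpa [SimpleGraph.girth] using this
    omega
  -- closing a short path gives a contradiction
  have hclose : ∀ (a b : V) (q : G.Walk a b), q.IsPath → ∀ (hab : G.Adj b a),
      s(b, a) ∉ q.edges → q.length + 1 ≤ 2 * k → False := by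
    intro a b q hqp hab he hlen
    have hc : (SimpleGraph.Walk.cons hab q).IsCycle :=
      (SimpleGraph.Walk.cons_isCycle_iff q hab).mpr ⟨hqp, he⟩
    have := hcycbound b (SimpleGraph.Walk.cons hab q) hc
    simp only [SimpleGraph.Walk.length_cons] at this
    omega
  have claim : ∀ i : ℕ, i ≤ k → ∃ (c ν : V) (h : G.Adj c ν) (p : G.Walk ν ν₀),
      c ∈ C ∧ ν ∉ C ∧ w c ≠ 0 ∧ (SimpleGraph.Walk.cons h p).IsPath ∧
      (SimpleGraph.Walk.cons h p).length = 2 * i + 1 ∧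
      ((SimpleGraph.Walk.cons h p).support.filter (· ∈ C)).length = i + 1 := by
    intro i
    induction i with
    | zero =>
      intro _
      have hex : ∃ c ∈ C.filter (fun c => G.Adj c ν₀), w c ≠ 0 := by
        by_contra hcon
        push_neg at hcon
        exact hT1 (Finset.sum_eq_zero hcon)
      obtain ⟨c, hcmem, hwc⟩ := hex
      rw [Finset.mem_filter] at hcmem
      obtain ⟨hcC, hadj⟩ := hcmem
      refine ⟨c, ν₀, hadj, SimpleGraph.Walk.nil, hcC, hν₀, hwc, ?_, by simp, ?_⟩
      · rw [SimpleGraph.Walk.cons_isPath_iff]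
        exact ⟨SimpleGraph.Walk.IsPath.nil, by simp; rintro rfl; exact hν₀ hcC⟩
      · simp [hcC, hν₀]
    | succ i ih =>
      intro hik
      obtain ⟨c, ν, h, p, hcC, hνC, hwc, hpath, hlen, hcount⟩ := ih (by omega)
      have hplen : p.length = 2 * i := by
        simp only [SimpleGraph.Walk.length_cons] at hlen; omega
      have hcp : c ∉ p.support := ((SimpleGraph.Walk.cons_isPath_iff h p).mp hpath).2
      have hppath : p.IsPath := ((SimpleGraph.Walk.cons_isPath_iff h p).mp hpath).1
      -- find a second outside neighbour ν' ≠ ν of c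
      have hνD : ν ∈ {v : V | v ∉ C ∧ G.Adj c v} := ⟨hνC, h⟩
      have hD2 : 2 ≤ {v : V | v ∉ C ∧ G.Adj c v}.ncard := by
        rcases hdeg c hcC with h0 | h2
        · exfalso
          rw [Set.ncard_eq_zero (Set.toFinite _)] at h0
          rw [h0] at hνD
          exact hνD
        · exact h2
      obtain ⟨ν', hν'D, hν'ν⟩ := Set.exists_ne_of_one_lt_ncard (s := {v : V | v ∉ C ∧ G.Adj c v}) (by omega) ν
      obtain ⟨hν'C, hcν'⟩ := hν'D
      by_cases hν'P : ν' ∈ (SimpleGraph.Walk.cons h p).support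
      · -- cycle through ν'
        exfalso
        have hν'c : ν' ≠ c := fun hE => G.irrefl (hE ▸ hcν')
        have hν'p : ν' ∈ p.support := by
          rw [SimpleGraph.Walk.support_cons] at hν'P
          rcases List.mem_cons.mp hν'P with hE | hm
          · exact absurd hE hν'c
          · exact hm
        set q' := p.takeUntil ν' hν'p with hq'
        have hq'path : q'.IsPath := hppath.takeUntil hν'p
        have hcq' : c ∉ q'.support := fun hm =>
          hcp (SimpleGraph.Walk.support_takeUntil_subset p hν'p hm)
        have hqpath : (SimpleGraph.Walk.cons h q').IsPath :=
          (SimpleGraph.Walk.cons_isPath_iff h q').mpr ⟨hq'path, hcq'⟩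
        refine hclose c ν' (SimpleGraph.Walk.cons h q') hqpath hcν'.symm ?_ ?_
        · rw [SimpleGraph.Walk.edges_cons]
          intro hm
          rcases List.mem_cons.mp hm with hE | hm'
          · rw [Sym2.eq_iff] at hE
            rcases hE with ⟨h1, h2⟩ | ⟨h1, h2⟩
            · exact hν'c h1
            · exact hν'ν h1
          · exact hcq' (SimpleGraph.Walk.snd_mem_support_of_mem_edges q' hm')
        · have hle : q'.length ≤ p.length := SimpleGraph.Walk.length_takeUntil_le p hν'p
          simp only [SimpleGraph.Walk.length_cons]
          omega
      · -- extend by ν', find new adversary c'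
        set P' := SimpleGraph.Walk.cons (hcν'.symm) (SimpleGraph.Walk.cons h p) with hP'
        have hP'path : P'.IsPath :=
          (SimpleGraph.Walk.cons_isPath_iff _ _).mpr ⟨hpath, hν'P⟩
        have hν'ν₀ : ν' ≠ ν₀ := by
          intro hE
          exact hν'P (hE ▸ (SimpleGraph.Walk.cons h p).end_mem_support)
        have hsum0 := hT0 ν' hν'C hν'ν₀
        have hcmem : c ∈ C.filter (fun c => G.Adj c ν') := by
          rw [Finset.mem_filter]; exact ⟨hcC, hcν'⟩
        have hex : ∃ c' ∈ C.filter (fun c => G.Adj c ν'), c' ≠ c ∧ w c' ≠ 0 := by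
          by_contra hcon
          push_neg at hcon
          have : ∑ x ∈ C.filter (fun c => G.Adj c ν'), w x = w c := by
            refine Finset.sum_eq_single_of_mem c hcmem fun b hb hbc => ?_
            exact hcon b hb hbc
          exact hwc (this ▸ hsum0)
        obtain ⟨c', hc'mem, hc'c, hwc'⟩ := hex
        rw [Finset.mem_filter] at hc'mem
        obtain ⟨hc'C, hc'ν'⟩ := hc'mem
        by_cases hc'P : c' ∈ P'.support
        · -- cycle through c'
          exfalso
          have hc'ne : c' ≠ ν' := fun hE => hν'C (hE ▸ hc'C)
          have hc'P2 : c' ∈ (SimpleGraph.Walk.cons h p).support := by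
            rw [hP', SimpleGraph.Walk.support_cons] at hc'P
            rcases List.mem_cons.mp hc'P with hE | hm
            · exact absurd hE hc'ne
            · exact hm
          set P := SimpleGraph.Walk.cons h p with hPdef
          set Q := P.takeUntil c' hc'P2 with hQ
          have hQpath : Q.IsPath := hpath.takeUntil hc'P2
          have hν'Q : ν' ∉ Q.support := fun hm =>
            hν'P (SimpleGraph.Walk.support_takeUntil_subset P hc'P2 hm)
          have hqpath : (SimpleGraph.Walk.cons hcν'.symm Q).IsPath :=
            (SimpleGraph.Walk.cons_isPath_iff _ _).mpr ⟨hQpath, hν'Q⟩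
          have hQlen : Q.length + (P.dropUntil c' hc'P2).length = P.length := by
            have := congrArg SimpleGraph.Walk.length (P.take_spec hc'P2)
            rwa [SimpleGraph.Walk.length_append] at this
          have hdropnn : (P.dropUntil c' hc'P2).length ≠ 0 := by
            intro h0
            have : c' = ν₀ := SimpleGraph.Walk.eq_of_length_eq_zero h0
            exact hν₀ (this ▸ hc'C)
          refine hclose ν' c' (SimpleGraph.Walk.cons hcν'.symm Q) hqpath hc'ν' ?_ ?_
          · rw [SimpleGraph.Walk.edges_cons]
            intro hm
            rcases List.mem_cons.mp hm with hE | hm'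
            · rw [Sym2.eq_iff] at hE
              rcases hE with ⟨h1, h2⟩ | ⟨h1, h2⟩
              · exact hc'ne h1
              · exact hc'c h1
            · exact hν'Q (SimpleGraph.Walk.snd_mem_support_of_mem_edges Q hm')
          · simp only [SimpleGraph.Walk.length_cons]
            omega
        · -- extend
          refine ⟨c', ν', hc'ν', P', hc'C, hν'C, hwc', ?_, ?_, ?_⟩
          · exact (SimpleGraph.Walk.cons_isPath_iff _ _).mpr ⟨hP'path, hc'P⟩
          · simp only [hP', SimpleGraph.Walk.length_cons]
            omega
          · rw [hP']
            simp only [SimpleGraph.Walk.support_cons, List.filter_cons] at hcount ⊢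
            simp only [decide_eq_true_eq, hcC, hc'C, hν'C, hνC, if_true, if_false,
              List.length_cons] at hcount ⊢
            omega
  -- conclude: k+1 distinct vertices of C
  obtain ⟨c, ν, h, p, hcC, hνC, hwc, hpath, hlen, hcount⟩ := claim k le_rfl
  set L := (SimpleGraph.Walk.cons h p).support.filter (· ∈ C) with hL
  have hnodup : L.Nodup := hpath.support_nodup.filter _
  have hsub : L.toFinset ⊆ C := by
    intro x hx
    rw [List.mem_toFinset] at hx
    have := List.of_mem_filter hx
    simpa using this
  have hcard : L.toFinset.card = k + 1 := by
    rw [List.toFinset_card_of_nodup hnodup, hcount]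
  have := Finset.card_le_card hsub
  omega

theorem stmt_10 {V : Type*} [Fintype V] [DecidableEq V] (G : SimpleGraph V)
    (k : ℕ) (C : Finset V) (hk : C.card = k)
    (hdeg : ∀ c ∈ C, ({v : V | v ∉ C ∧ G.Adj c v}.ncard = 0 ∨
                      2 ≤ {v : V | v ∉ C ∧ G.Adj c v}.ncard))
    (hgirth : 2 * (k : ℕ∞) < G.girth)
    (t : ℕ)
    (A : Matrix (Fin t) ({v : V // v ∉ C ∧ ∃ c ∈ C, G.Adj c v} × Fin t) ℝ)
    (hbin : ∀ τ c, A τ c = 0 ∨ A τ c = 1)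
    (hrows : ∀ τ : Fin t, ∃ c ∈ C,
      ∀ ν : {v : V // v ∉ C ∧ ∃ c ∈ C, G.Adj c v},
        (G.Adj c ν.1 → ∑ i : Fin t, A τ (ν, i) = 1) ∧
        (¬ G.Adj c ν.1 → ∀ i : Fin t, A τ (ν, i) = 0)) :
    ¬ ∃ (y : Fin t → ℝ) (p : {v : V // v ∉ C ∧ ∃ c ∈ C, G.Adj c v} × Fin t),
        Matrix.vecMul y A p ≠ 0 ∧ ∀ q, q ≠ p → Matrix.vecMul y A q = 0 := by
  classical
  rintro ⟨y, p, hp, hq⟩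
  choose f hfC hfprop using hrows
  set w : V → ℝ := fun c => ∑ τ ∈ Finset.univ.filter (fun τ => f τ = c), y τ with hw
  have hT : ∀ ν : {v : V // v ∉ C ∧ ∃ c ∈ C, G.Adj c v},
      ∑ i : Fin t, Matrix.vecMul y A (ν, i)
        = ∑ c ∈ C.filter (fun c => G.Adj c ν.1), w c := by
    intro ν
    have hrow : ∀ τ : Fin t, ∑ i : Fin t, A τ (ν, i)
        = if G.Adj (f τ) ν.1 then 1 else 0 := by
      intro τ
      by_cases hadj : G.Adj (f τ) ν.1
      · rw [if_pos hadj]; exact (hfprop τ ν).1 hadj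
      · rw [if_neg hadj]; exact Finset.sum_eq_zero fun i _ => (hfprop τ ν).2 hadj i
    have h1 : ∑ i : Fin t, Matrix.vecMul y A (ν, i)
        = ∑ τ : Fin t, if G.Adj (f τ) ν.1 then y τ else 0 := by
      simp only [Matrix.vecMul, dotProduct]
      rw [Finset.sum_comm]
      refine Finset.sum_congr rfl fun τ _ => ?_
      rw [← Finset.mul_sum, hrow τ]
      split <;> simp
    rw [h1, ← Finset.sum_fiberwise_of_maps_to (fun τ _ => hfC τ)
      (fun τ => if G.Adj (f τ) ν.1 then y τ else 0)]
    rw [Finset.sum_filter]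
    refine Finset.sum_congr rfl fun c hc => ?_
    by_cases hadj : G.Adj c ν.1
    · rw [if_pos hadj, hw]
      refine Finset.sum_congr rfl fun τ hτ => ?_
      rw [Finset.mem_filter] at hτ
      rw [if_pos (by rw [hτ.2]; exact hadj)]
    · rw [if_neg hadj]
      refine Finset.sum_eq_zero fun τ hτ => ?_
      rw [Finset.mem_filter] at hτ
      rw [if_neg (by rw [hτ.2]; exact hadj)]
  have hT1 : ∑ c ∈ C.filter (fun c => G.Adj c p.1.1), w c ≠ 0 := by
    rw [← hT p.1]
    have : ∑ i : Fin t, Matrix.vecMul y A (p.1, i) = Matrix.vecMul y A p := by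
      have h2 := Finset.sum_eq_single_of_mem (s := Finset.univ)
        (f := fun i => Matrix.vecMul y A (p.1, i)) p.2 (Finset.mem_univ _)
        (fun i _ hi => hq (p.1, i) fun hE => hi (congrArg Prod.snd hE))
      simpa using h2
    rw [this]
    exact hp
  have hT0 : ∀ ν, ν ∉ C → ν ≠ p.1.1 → ∑ c ∈ C.filter (fun c => G.Adj c ν), w c = 0 := by
    intro ν hν hne
    by_cases hex : ∃ c ∈ C, G.Adj c ν
    · rw [← hT ⟨ν, hν, hex⟩]
      refine Finset.sum_eq_zero fun i _ => ?_
      refine hq _ fun hE => hne ?_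
      exact congrArg (fun q => q.1.1) hE
    · push_neg at hex
      rw [Finset.filter_false_of_mem fun c hc => hex c hc]
      simp
  exact core_girth G k C hk hdeg hgirth w p.1.1 p.1.2.1 hT1 hT0
end
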